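/- arXiv:2501.16960 — 9 statements merged into one kernel-verified Lean document; each statement's English description precedes it below -/
import Mathlib

section
/- If G is a connected block graph of order n ≥ 2, then the Δ-convex partition number Θ_c(G) equals the minimum number of vertices of a block of G. -/
variable {V : Type*}

/-- A set `S` is Δ-convex: no vertex outside `S` is adjacent to two adjacent vertices of `S`. -/
def DeltaConvex (G : SimpleGraph V) (S : Set V) : Prop :=
  ∀ ⦃u v w : V⦄, u ∈ S → v ∈ S → G.Adj u v → G.Adj w u → G.Adj w v → w ∈ S

/-- The Δ-convex hull of `S`: the smallest Δ-convex set containing `S`. -/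
def DeltaHull (G : SimpleGraph V) (S : Set V) : Set V :=
  ⋂₀ {T | DeltaConvex G T ∧ S ⊆ T}

/-- A Δ-convex `p`-cover. -/
def IsDeltaCover (G : SimpleGraph V) {p : ℕ} (F : Fin p → Set V) : Prop :=
  (∀ i, DeltaConvex G (F i)) ∧ (⋃ i, F i) = Set.univ ∧
    ∀ i, ¬ F i ⊆ ⋃ j ∈ ({i}ᶜ : Set (Fin p)), F j

/-- A Δ-convex `p`-partition. -/
def IsDeltaPartition (G : SimpleGraph V) {p : ℕ} (F : Fin p → Set V) : Prop :=
  (∀ i, DeltaConvex G (F i)) ∧ (⋃ i, F i) = Set.univ ∧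
    (∀ i, (F i).Nonempty) ∧ ∀ i j, i ≠ j → Disjoint (F i) (F j)

/-- The Δ-convex cover number `φ_c(G)`. -/
noncomputable def coverNumber (G : SimpleGraph V) : ℕ :=
  sInf {p | 2 ≤ p ∧ ∃ F : Fin p → Set V, IsDeltaCover G F}

/-- The Δ-convex partition number `Θ_c(G)`. -/
noncomputable def partitionNumber (G : SimpleGraph V) : ℕ :=
  sInf {p | 2 ≤ p ∧ ∃ F : Fin p → Set V, IsDeltaPartition G F}

/-- A vertex is Δ-extreme iff it lies in no triangle (this characterization is used directly). -/
def DeltaExtreme (G : SimpleGraph V) (u : V) : Prop :=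
  ∀ v w : V, ¬ (G.Adj u v ∧ G.Adj u w ∧ G.Adj v w)

/-- `B` induces a maximal 2-connected (or edge) subgraph candidate: `B` has at least two
vertices, induces a connected subgraph, and removing any single vertex keeps it connected. -/
def IsBiconnectedSet (G : SimpleGraph V) (B : Set V) : Prop :=
  2 ≤ B.ncard ∧ (G.induce B).Connected ∧
    ∀ v ∈ B, (G.induce (B \ {v})).Connected

/-- A block of `G`: a maximal biconnected set. -/
def IsBlock (G : SimpleGraph V) (B : Set V) : Prop :=
  IsBiconnectedSet G B ∧ ∀ B' : Set V, IsBiconnectedSet G B' → B ⊆ B' → B = B'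


/-!
For any block `B`, sending each vertex to the vertex of `B` through which it is reached from `B`
partitions the graph into `|B|` branches. Two branches are disjoint because a path between two
vertices of `B` that leaves `B` would enlarge the block, and Δ-convexity of a branch follows from
disjointness. Conversely, in a Δ-convex partition into fewer parts than the smallest block has
vertices, every block is a clique with two vertices in a common part, hence lies inside that part;
so adjacent vertices always share a part and connectivity leaves room for only one part.
-/

open SimpleGraph

theorem SimpleGraph.Walk.IsPath.exists_walk_to_end_avoiding {G : SimpleGraph V} {a c : V}
    {p : G.Walk a c} (hp : p.IsPath) {x y : V} (hy : y ∈ p.support) (hyx : y ≠ x) :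
    ∃ z, (z = a ∨ z = c) ∧ ∃ q : G.Walk y z, x ∉ q.support ∧ q.support ⊆ p.support := by
  classical
  induction p with
  | nil =>
    rw [Walk.support_nil, List.mem_singleton] at hy
    subst hy
    exact ⟨y, Or.inl rfl, .nil, by simpa using hyx.symm, List.Subset.refl _⟩
  | @cons a d c h q ih =>
    rw [Walk.cons_isPath_iff] at hp
    rw [Walk.support_cons, List.mem_cons] at hy
    rcases hy with rfl | hy
    · exact ⟨y, Or.inl rfl, .nil, by simpa using hyx.symm, by simp⟩
    by_cases hxa : x = a
    · subst hxa
      exact ⟨c, Or.inr rfl, q.dropUntil y hy,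
        fun hx => hp.2 (q.support_dropUntil_subset_support hy hx),
        fun w hw => List.mem_cons_of_mem _ (q.support_dropUntil_subset_support hy hw)⟩
    obtain ⟨z, rfl | rfl, r, hxr, hrq⟩ := ih hp.1 hy
    · refine ⟨a, Or.inl rfl, r.concat h.symm, ?_, ?_⟩
      · simp [Walk.support_concat, hxr, hxa]
      · simpa [Walk.support_concat] using List.Subset.trans hrq (List.subset_cons_self _ _)
    · exact ⟨z, Or.inr rfl, r, hxr, List.Subset.trans hrq (List.subset_cons_self _ _)⟩

theorem SimpleGraph.Preconnected.mem_of_forall_adj_mem {G : SimpleGraph V} (hG : G.Preconnected)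
    {S : Set V} (hS : ∀ ⦃u v⦄, G.Adj u v → u ∈ S → v ∈ S) {u : V} (hu : u ∈ S) (v : V) :
    v ∈ S := by
  obtain ⟨w⟩ := hG u v
  induction w with
  | nil => exact hu
  | cons h _ ih => exact ih (hS h hu)

section Blocks

variable {G : SimpleGraph V}

theorem isBiconnectedSet_pair {u v : V} (h : G.Adj u v) : IsBiconnectedSet G {u, v} := by
  refine ⟨(Set.ncard_pair h.ne).ge, induce_pair_connected_of_adj h, ?_⟩
  rintro x (rfl | rfl)
  · rw [Set.pair_sdiff_left h.ne, induce_singleton_eq_top]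
    exact connected_top
  · rw [Set.pair_sdiff_right h.ne, induce_singleton_eq_top]
    exact connected_top

theorem IsBiconnectedSet.union_support {B : Set V} (hB : IsBiconnectedSet G B) {b b' : V}
    (hb : b ∈ B) (hb' : b' ∈ B) {p : G.Walk b b'} (hp : p.IsPath) :
    IsBiconnectedSet G (B ∪ {v | v ∈ p.support}) := by
  obtain ⟨hcard, hconn, hcut⟩ := hB
  have hfin : (B ∪ {v | v ∈ p.support}).Finite :=
    (Set.finite_of_ncard_pos (by omega)).union p.support.finite_toSet
  refine ⟨hcard.trans (Set.ncard_le_ncard Set.subset_union_left hfin),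
    induce_union_connected hconn.preconnected p.connected_induce_support.preconnected
      ⟨b, hb, p.start_mem_support⟩, fun x _ => ?_⟩
  have hBx : (G.induce (B \ {x})).Connected := by
    by_cases hx : x ∈ B
    · exact hcut x hx
    · rwa [Set.sdiff_singleton_eq_self hx]
  obtain ⟨⟨u, hu⟩⟩ := hBx.nonempty
  refine induce_connected_of_patches u ⟨Or.inl hu.1, hu.2⟩ fun {v} hv => ?_
  obtain ⟨hvB | hvp, hvx⟩ := hv
  · exact ⟨B \ {x}, Set.sdiff_subset_sdiff_left Set.subset_union_left, hu, ⟨hvB, hvx⟩,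
      hBx.preconnected _ _⟩
  -- Removing `x` cuts the path in two pieces, each of which still ends in `B \ {x}`.
  obtain ⟨z, hz, q, hxq, hqp⟩ := hp.exists_walk_to_end_avoiding hvp hvx
  have hzB : z ∈ B \ {x} :=
    ⟨hz.elim (· ▸ hb) (· ▸ hb'), fun h => hxq (h ▸ q.end_mem_support)⟩
  refine ⟨B \ {x} ∪ {w | w ∈ q.support}, ?_, Or.inl hu, Or.inr q.start_mem_support,
    (induce_union_connected hBx.preconnected q.connected_induce_support.preconnected
      ⟨z, hzB, q.end_mem_support⟩).preconnected _ _⟩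
  rintro w (⟨hwB, hwx⟩ | hwq)
  · exact ⟨Or.inl hwB, hwx⟩
  · exact ⟨Or.inr (hqp hwq), fun h => hxq (h ▸ hwq)⟩

theorem exists_isBlock_superset [Finite V] {A : Set V} (hA : IsBiconnectedSet G A) :
    ∃ B, IsBlock G B ∧ A ⊆ B := by
  obtain ⟨B, hAB, hB⟩ := Finite.exists_le_maximal (p := IsBiconnectedSet G) hA
  exact ⟨B, ⟨hB.1, fun B' hB' hBB' => hBB'.antisymm (hB.2 hB' hBB')⟩, hAB⟩

theorem IsBlock.support_subset {B : Set V} (hB : IsBlock G B) {b b' : V} (hb : b ∈ B)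
    (hb' : b' ∈ B) {p : G.Walk b b'} (hp : p.IsPath) : {v | v ∈ p.support} ⊆ B := by
  rw [hB.2 _ (hB.1.union_support hb hb' hp) Set.subset_union_left]
  exact Set.subset_union_right

end Blocks

def branch (G : SimpleGraph V) (B : Set V) (b : V) : Set V :=
  {v | ∃ w : G.Walk b v, ∀ x ∈ w.support, x ∈ B → x = b}

section Branches

variable {G : SimpleGraph V} {B : Set V}

theorem self_mem_branch (b : V) : b ∈ branch G B b :=
  ⟨.nil, by simp +contextual⟩

theorem eq_of_mem_branch {b v : V} (hv : v ∈ branch G B b) (hvB : v ∈ B) : v = b :=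
  hv.elim fun w hw => hw v w.end_mem_support hvB

theorem mem_branch_of_adj {b u w : V} (hu : u ∈ branch G B b) (huw : G.Adj u w) (hw : w ∉ B) :
    w ∈ branch G B b := by
  obtain ⟨p, hp⟩ := hu
  refine ⟨p.concat huw, fun x hx hxB => ?_⟩
  rw [Walk.support_concat, List.mem_append, List.mem_singleton] at hx
  rcases hx with hx | rfl
  · exact hp x hx hxB
  · exact absurd hxB hw

theorem exists_mem_branch {v c : V} (w : G.Walk v c) (hc : c ∈ B) :
    ∃ b ∈ B, v ∈ branch G B b := by
  induction w with
  | nil => exact ⟨_, hc, self_mem_branch _⟩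
  | @cons v d c h _ ih =>
    by_cases hv : v ∈ B
    · exact ⟨v, hv, self_mem_branch v⟩
    · obtain ⟨b, hb, hd⟩ := ih hc
      exact ⟨b, hb, mem_branch_of_adj hd h.symm hv⟩

theorem IsBlock.disjoint_branch (hB : IsBlock G B) {b b' : V} (hb : b ∈ B) (hb' : b' ∈ B)
    (hbb' : b ≠ b') : Disjoint (branch G B b) (branch G B b') := by
  classical
  refine Set.disjoint_left.mpr fun v ⟨w, hw⟩ ⟨w', hw'⟩ => ?_
  -- A path from `b` to `b'` through `v` lies in the block, so its first edge joins `b` to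
  -- another vertex of `B`; but that edge lies on `w` or on `w'`, which meet `B` only once.
  set p := (w.append w'.reverse).bypass
  have hpB := hB.support_subset hb hb' (w.append w'.reverse).bypass_isPath
  cases hp : p with
  | nil => exact hbb' rfl
  | @cons _ c _ h q =>
    have hc : c ∈ B := hpB (show c ∈ p.support by simp [hp])
    have hedge : s(b, c) ∈ (w.append w'.reverse).edges :=
      (w.append w'.reverse).edges_bypass_subset_edges (show s(b, c) ∈ p.edges by simp [hp])
    rw [Walk.edges_append, Walk.edges_reverse, List.mem_append, List.mem_reverse] at hedge
    rcases hedge with hedge | hedge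
    · exact h.ne (hw c (w.snd_mem_support_of_mem_edges hedge) hc).symm
    · exact hbb' (hw' b (w'.fst_mem_support_of_mem_edges hedge) hb)

theorem IsBlock.deltaConvex_branch (hB : IsBlock G B) {b : V} (hb : b ∈ B) :
    DeltaConvex G (branch G B b) := by
  intro u v w hu hv huv hwu hwv
  by_cases hwB : w ∈ B
  · by_contra hw
    have hwb : w ≠ b := by rintro rfl; exact hw (self_mem_branch w)
    -- One of `u`, `v` is not `b`; it then lies outside `B` and in the branches at `b` and `w`.
    obtain ⟨x, hx, hxb, hwx⟩ : ∃ x ∈ branch G B b, x ≠ b ∧ G.Adj w x := by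
      by_cases hub : u = b
      · exact ⟨v, hv, hub ▸ huv.ne', hwv⟩
      · exact ⟨u, hu, hub, hwu⟩
    have hxB : x ∉ B := fun h => hxb (eq_of_mem_branch hx h)
    exact Set.disjoint_left.mp (hB.disjoint_branch hb hwB (Ne.symm hwb)) hx
      (mem_branch_of_adj (self_mem_branch w) hwx hxB)
  · exact mem_branch_of_adj hu hwu.symm hwB

theorem IsBlock.isDeltaPartition_branch (hB : IsBlock G B) (hG : G.Connected) {n : ℕ}
    (e : Fin n ≃ B) : IsDeltaPartition G fun i => branch G B (e i) := by
  refine ⟨fun i => hB.deltaConvex_branch (e i).2, ?_, fun i => ⟨e i, self_mem_branch _⟩,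
    fun i j hij => hB.disjoint_branch (e i).2 (e j).2 fun h => hij (e.injective (Subtype.ext h))⟩
  obtain ⟨c, hc⟩ := Set.nonempty_of_ncard_ne_zero (s := B) (by have := hB.1.1; omega)
  refine Set.eq_univ_of_forall fun v => ?_
  obtain ⟨b, hb, hv⟩ := exists_mem_branch (hG v c).some hc
  exact Set.mem_iUnion.mpr ⟨e.symm ⟨b, hb⟩, by simpa using hv⟩

theorem IsBlock.exists_isDeltaPartition (hB : IsBlock G B) (hG : G.Connected) :
    ∃ F : Fin B.ncard → Set V, IsDeltaPartition G F := by
  have : Finite B := (Set.finite_of_ncard_pos (by have := hB.1.1; omega)).to_subtype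
  exact ⟨_, hB.isDeltaPartition_branch hG
    ((Finite.equivFin B).trans (finCongr (Nat.card_coe_set_eq B))).symm⟩

end Branches

section Partitions

variable {G : SimpleGraph V}

theorem DeltaConvex.subset_of_isClique {S K : Set V} (hS : DeltaConvex G S)
    (hK : G.IsClique K) {u v : V} (hu : u ∈ K ∩ S) (hv : v ∈ K ∩ S) (huv : u ≠ v) : K ⊆ S := by
  intro z hz
  by_cases hzu : z = u
  · exact hzu ▸ hu.2
  by_cases hzv : z = v
  · exact hzv ▸ hv.2
  exact hS hu.2 hv.2 (hK hu.1 hv.1 huv) (hK hz hu.1 hzu) (hK hz hv.1 hzv)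

theorem IsDeltaPartition.exists_subset_of_isClique {p : ℕ} {F : Fin p → Set V}
    (hF : IsDeltaPartition G F) {K : Set V} (hK : G.IsClique K)
    (hcard : p < K.ncard) : ∃ i, K ⊆ F i := by
  obtain ⟨hconv, hcover, -, -⟩ := hF
  choose f hf using fun v => Set.mem_iUnion.mp (hcover ▸ Set.mem_univ v)
  obtain ⟨u, hu, v, hv, huv, hfuv⟩ := Set.exists_ne_map_eq_of_ncard_lt_of_maps_to
    (t := Set.univ) (f := f) (by simpa using hcard) (fun _ _ => Set.mem_univ _)
  exact ⟨f u, (hconv (f u)).subset_of_isClique hK ⟨hu, hf u⟩ ⟨hv, hfuv ▸ hf v⟩ huv⟩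

theorem IsDeltaPartition.exists_isBlock_ncard_le [Finite V] (hG : G.Connected)
    (hclique : ∀ B, IsBlock G B → G.IsClique B) {p : ℕ} (hp : 2 ≤ p) {F : Fin p → Set V}
    (hF : IsDeltaPartition G F) : ∃ B, IsBlock G B ∧ B.ncard ≤ p := by
  by_contra! hlarge
  -- Every edge lies in a block, which is a clique too large to meet several parts.
  have hclosed (i : Fin p) : ∀ ⦃u v⦄, G.Adj u v → u ∈ F i → v ∈ F i := by
    intro u v huv hu
    obtain ⟨B, hB, huvB⟩ := exists_isBlock_superset (isBiconnectedSet_pair huv)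
    obtain ⟨j, hBj⟩ := hF.exists_subset_of_isClique (hclique B hB) (hlarge B hB)
    obtain rfl : i = j := by
      by_contra hij
      exact Set.disjoint_left.mp (hF.2.2.2 i j hij) hu (hBj (huvB (by simp)))
    exact hBj (huvB (by simp))
  have h01 : (⟨0, by omega⟩ : Fin p) ≠ ⟨1, by omega⟩ := by simp
  obtain ⟨u, hu⟩ := hF.2.2.1 ⟨0, by omega⟩
  obtain ⟨v, hv⟩ := hF.2.2.1 ⟨1, by omega⟩
  exact Set.disjoint_left.mp (hF.2.2.2 _ _ h01)
    (hG.preconnected.mem_of_forall_adj_mem (hclosed _) hu v) hv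

end Partitions

theorem stmt2_general [Fintype V] (G : SimpleGraph V) (hconn : G.Connected)
    (hblock : ∀ B : Set V, IsBlock G B → ∀ u ∈ B, ∀ v ∈ B, u ≠ v → G.Adj u v) :
    partitionNumber G = sInf {n | ∃ B : Set V, IsBlock G B ∧ B.ncard = n} := by
  apply csInf_eq_csInf_of_forall_exists_le
  · rintro p ⟨hp, F, hF⟩
    obtain ⟨B, hB, hBp⟩ := hF.exists_isBlock_ncard_le hconn hblock hp
    exact ⟨B.ncard, ⟨B, hB, rfl⟩, hBp⟩
  · rintro _ ⟨B, hB, rfl⟩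
    obtain ⟨F, hF⟩ := hB.exists_isDeltaPartition hconn
    exact ⟨B.ncard, ⟨hB.1.1, F, hF⟩, le_rfl⟩

theorem stmt2 [Fintype V] (G : SimpleGraph V) (hconn : G.Connected)
    (hn : 2 ≤ Fintype.card V)
    (hblock : ∀ B : Set V, IsBlock G B → ∀ u ∈ B, ∀ v ∈ B, u ≠ v → G.Adj u v) :
    partitionNumber G = sInf {n | ∃ B : Set V, IsBlock G B ∧ B.ncard = n} :=
  stmt2_general G hconn hblock
end

section
/- If G is a graph in which the Δ-convex hull of every pair of adjacent vertices is V(G), then the Δ-convex cover number, the Δ-convex partition number and the chromatic number of G coincide: φ_c(G) = Θ_c(G) = χ(G). -/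
variable {V : Type*}

/-!
Under the hull hypothesis a Δ-convex set containing an edge is all of `V`. Hence, as soon as a
Δ-convex cover has two irredundant members, every member is an independent set, and a cover
by `p` sets is a proper `p`-coloring: `χ(G) ≤ φ_c(G) ≤ Θ_c(G)`. Conversely, independent sets are
trivially Δ-convex and the colour classes of a `χ(G)`-coloring are all nonempty, so they form a
Δ-convex partition with `χ(G)` parts.
-/

section

variable {G : SimpleGraph V}

lemma deltaHull_subset {S T : Set V} (hT : DeltaConvex G T) (hST : S ⊆ T) :
    DeltaHull G S ⊆ T :=
  Set.sInter_subset_of_mem ⟨hT, hST⟩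

lemma SimpleGraph.IsIndepSet.deltaConvex {S : Set V} (hS : G.IsIndepSet S) :
    DeltaConvex G S :=
  fun _ _ _ hu hv huv _ _ ↦ (hS hu hv huv.ne huv).elim

lemma DeltaConvex.eq_univ_of_adj (hhull : ∀ u v : V, G.Adj u v → DeltaHull G {u, v} = Set.univ)
    {S : Set V} (hS : DeltaConvex G S) {u v : V} (hu : u ∈ S) (hv : v ∈ S) (huv : G.Adj u v) :
    S = Set.univ :=
  Set.eq_univ_of_univ_subset <| hhull u v huv ▸
    deltaHull_subset hS (Set.insert_subset hu (Set.singleton_subset_iff.2 hv))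

lemma IsDeltaPartition.isDeltaCover {p : ℕ} {F : Fin p → Set V} (hF : IsDeltaPartition G F) :
    IsDeltaCover G F := by
  obtain ⟨hconv, hcover, hne, hdisj⟩ := hF
  refine ⟨hconv, hcover, fun i hsub ↦ ?_⟩
  obtain ⟨x, hx⟩ := hne i
  obtain ⟨j, hji, hxj⟩ := Set.mem_iUnion₂.1 (hsub hx)
  exact Set.disjoint_left.1 (hdisj i j (Ne.symm hji)) hx hxj

lemma SimpleGraph.Coloring.isDeltaPartition_colorClass {p : ℕ} (C : G.Coloring (Fin p))
    (hC : Function.Surjective C) : IsDeltaPartition G C.colorClass :=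
  ⟨fun i ↦ (C.isIndepSet_colorClass i).deltaConvex,
    Set.eq_univ_of_forall fun v ↦ Set.mem_iUnion.2 ⟨C v, C.mem_colorClass v⟩,
    fun i ↦ (hC i).imp fun _ hv ↦ hv,
    fun _ _ hij ↦ Set.disjoint_left.2 fun _ hi hj ↦ hij (hi.symm.trans hj)⟩

lemma IsDeltaCover.isIndepSet (hhull : ∀ u v : V, G.Adj u v → DeltaHull G {u, v} = Set.univ)
    {p : ℕ} (hp : 2 ≤ p) {F : Fin p → Set V} (hF : IsDeltaCover G F) (i : Fin p) :
    G.IsIndepSet (F i) := by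
  intro u hu v hv _ huv
  have hFi : F i = Set.univ := (hF.1 i).eq_univ_of_adj hhull hu hv huv
  have : Nontrivial (Fin p) := Fin.nontrivial_iff_two_le.2 hp
  obtain ⟨j, hji⟩ := exists_ne i
  exact hF.2.2 j fun x _ ↦ Set.mem_biUnion (Ne.symm hji) (hFi ▸ Set.mem_univ x)

lemma IsDeltaCover.colorable (hhull : ∀ u v : V, G.Adj u v → DeltaHull G {u, v} = Set.univ)
    {p : ℕ} (hp : 2 ≤ p) {F : Fin p → Set V} (hF : IsDeltaCover G F) : G.Colorable p := by
  have hmem (v : V) : ∃ i, v ∈ F i := Set.mem_iUnion.1 (hF.2.1 ▸ Set.mem_univ v)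
  choose f hf using hmem
  exact ⟨.mk f fun {u v} huv hfuv ↦
    hF.isIndepSet hhull hp (f u) (hf u) (hfuv ▸ hf v) huv.ne huv⟩

end

theorem stmt6_general [Fintype V] (G : SimpleGraph V)
    (hedge : ∃ u v : V, G.Adj u v)
    (hhull : ∀ u v : V, G.Adj u v → DeltaHull G {u, v} = Set.univ) :
    coverNumber G = partitionNumber G ∧
      (partitionNumber G : ℕ∞) = G.chromaticNumber := by
  obtain ⟨u, v, huv⟩ := hedge
  obtain ⟨n, hn⟩ : ∃ n : ℕ, (n : ℕ∞) = G.chromaticNumber :=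
    ENat.ne_top_iff_exists.1 (G.chromaticNumber_ne_top_iff_exists.2 ⟨_, G.colorable_of_fintype⟩)
  have hn2 : 2 ≤ n := by exact_mod_cast hn ▸ G.two_le_chromaticNumber_of_adj huv
  obtain ⟨C⟩ : G.Colorable n := G.chromaticNumber_le_iff_colorable.1 hn.ge
  have hpart : IsDeltaPartition G C.colorClass :=
    C.isDeltaPartition_colorClass ((G.chromaticNumber_eq_iff_forall_surjective ⟨C⟩).1 hn.symm C)
  have hlower {p : ℕ} (hp : 2 ≤ p) {F : Fin p → Set V} (hF : IsDeltaCover G F) : n ≤ p := by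
    exact_mod_cast hn ▸ (hF.colorable hhull hp).chromaticNumber_le
  have hθ : partitionNumber G = n :=
    IsLeast.csInf_eq ⟨⟨hn2, _, hpart⟩, fun _ ⟨hp, _, hF⟩ ↦ hlower hp hF.isDeltaCover⟩
  have hφ : coverNumber G = n :=
    IsLeast.csInf_eq ⟨⟨hn2, _, hpart.isDeltaCover⟩, fun _ ⟨hp, _, hF⟩ ↦ hlower hp hF⟩
  exact ⟨hφ.trans hθ.symm, hθ ▸ hn⟩

theorem stmt6 [Fintype V] (G : SimpleGraph V) (hconn : G.Connected)
    (hedge : ∃ u v : V, G.Adj u v)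
    (hhull : ∀ u v : V, G.Adj u v → DeltaHull G {u, v} = Set.univ) :
    coverNumber G = partitionNumber G ∧
      (partitionNumber G : ℕ∞) = G.chromaticNumber :=
  stmt6_general G hedge hhull
end

section
/- Let G' be a connected graph with a universal vertex u and suppose G' \ {u} is connected and non-trivial. Then every Δ-convex set of G' that is not an independent set is all of V(G'). -/
variable {V : Type*}

theorem stmt9 [Fintype V] (G' : SimpleGraph V) (u : V)
    (huniv : ∀ v : V, v ≠ u → G'.Adj u v)
    (hconn : (G'.induce ({u}ᶜ : Set V)).Connected)
    (hnt : ({u}ᶜ : Set V).Nontrivial)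
    (S : Set V) (hS : DeltaConvex G' S)
    (hni : ∃ a ∈ S, ∃ b ∈ S, G'.Adj a b) :
    S = Set.univ := by
  obtain ⟨a, ha, b, hb, hab⟩ := hni
  -- u ∈ S
  have hu : u ∈ S := by
    by_cases hau : a = u
    · exact hau ▸ ha
    · by_cases hbu : b = u
      · exact hbu ▸ hb
      · exact hS ha hb hab (huniv a hau) (huniv b hbu)
  -- there is v ∈ S with v ≠ u
  have hv : ∃ v ∈ S, v ≠ u := by
    by_cases hau : a = u
    · exact ⟨b, hb, fun h => G'.ne_of_adj hab (hau.trans h.symm)⟩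
    · exact ⟨a, ha, hau⟩
  obtain ⟨v, hvS, hvu⟩ := hv
  -- closure under adjacency in induced graph
  have step : ∀ x y : ({u}ᶜ : Set V), (G'.induce ({u}ᶜ : Set V)).Adj x y →
      (x : V) ∈ S → (y : V) ∈ S := by
    rintro ⟨x, hx⟩ ⟨y, hy⟩ hadj hxS
    have hxu : x ≠ u := hx
    have hyu : y ≠ u := hy
    have hxy : G'.Adj x y := hadj
    exact hS hu hxS (huniv x hxu) (G'.adj_symm (huniv y hyu)) (G'.adj_symm hxy)
  -- all of {u}ᶜ is in S
  ext w
  simp only [Set.mem_univ, iff_true]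
  by_cases hwu : w = u
  · exact hwu ▸ hu
  · have hreach := hconn ⟨v, hvu⟩ ⟨w, hwu⟩
    obtain ⟨p⟩ := hreach
    have key : ∀ (x z : ({u}ᶜ : Set V)) (q : (G'.induce ({u}ᶜ : Set V)).Walk x z),
        (x : V) ∈ S → (z : V) ∈ S := by
      intro x z q
      induction q with
      | nil => exact id
      | cons h q ih => exact fun hx => ih (step _ _ h hx)
    exact key ⟨v, hvu⟩ ⟨w, hwu⟩ p hvS
end

section
/- A graph G with at least one triangle admits a Δ-convex 2-partition if and only if for some triangle T of G, the smallest set S containing T and closed under the operation 'add every triangle sharing at least one vertex with S' is a proper subset of V(G). -/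
variable {V : Type*}

/-- `S` is closed under adding triangles meeting it. -/
def TriClosed (G : SimpleGraph V) (S : Set V) : Prop :=
  ∀ a b c : V, G.Adj a b → G.Adj b c → G.Adj a c →
    (a ∈ S ∨ b ∈ S ∨ c ∈ S) → a ∈ S ∧ b ∈ S ∧ c ∈ S

/-- The smallest superset of `T` closed under adding triangles meeting it. -/
def triClosure (G : SimpleGraph V) (T : Set V) : Set V :=
  ⋂₀ {S | T ⊆ S ∧ TriClosed G S}

theorem stmt12 [Fintype V] (G : SimpleGraph V)
    (hT : ∃ a b c : V, G.Adj a b ∧ G.Adj b c ∧ G.Adj a c) :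
    (∃ S1 S2 : Set V, S1.Nonempty ∧ S2.Nonempty ∧ Disjoint S1 S2 ∧
      S1 ∪ S2 = Set.univ ∧ DeltaConvex G S1 ∧ DeltaConvex G S2) ↔
      ∃ a b c : V, G.Adj a b ∧ G.Adj b c ∧ G.Adj a c ∧
        triClosure G {a, b, c} ≠ Set.univ := by
  constructor
  · rintro ⟨S1, S2, ⟨x1, hx1⟩, ⟨x2, hx2⟩, hdisj, huniv, hc1, hc2⟩
    obtain ⟨a, b, c, hab, hbc, hac⟩ := hT
    have mem12 : ∀ v, v ∈ S1 ∨ v ∈ S2 := fun v => by have h := Set.mem_univ v; rw [← huniv] at h; exact h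
    have notboth : ∀ v, v ∈ S1 → v ∈ S2 → False := fun v h1 h2 =>
      Set.disjoint_left.mp hdisj h1 h2
    -- helper: a triangle with one vertex in a convex side lies entirely in that side
    have full : ∀ S S' : Set V, DeltaConvex G S → DeltaConvex G S' →
        (∀ v, v ∈ S ∨ v ∈ S') → (∀ v, v ∈ S → v ∈ S' → False) →
        ∀ x y z : V, G.Adj x y → G.Adj y z → G.Adj x z → x ∈ S → y ∈ S ∧ z ∈ S := by
      intro S S' hS hS' hcov hnb x y z hxy hyz hxz hx
      have hy : y ∈ S := by
        rcases hcov y with hy | hy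
        · exact hy
        · rcases hcov z with hz | hz
          · exact hS hx hz hxz hxy.symm hyz
          · exact (hnb x hx (hS' hy hz hyz hxy hxz)).elim
      exact ⟨hy, hS hx hy hxy hxz.symm hyz.symm⟩
    have tclosed : ∀ S S' : Set V, DeltaConvex G S → DeltaConvex G S' →
        (∀ v, v ∈ S ∨ v ∈ S') → (∀ v, v ∈ S → v ∈ S' → False) →
        TriClosed G S := by
      intro S S' hS hS' hcov hnb x y z hxy hyz hxz hmem
      rcases hmem with h | h | h
      · obtain ⟨hy, hz⟩ := full S S' hS hS' hcov hnb x y z hxy hyz hxz h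
        exact ⟨h, hy, hz⟩
      · obtain ⟨hx, hz⟩ := full S S' hS hS' hcov hnb y x z hxy.symm hxz hyz h
        exact ⟨hx, h, hz⟩
      · obtain ⟨hx, hy⟩ := full S S' hS hS' hcov hnb z x y hxz.symm hxy hyz.symm h
        exact ⟨hx, hy, h⟩
    rcases mem12 a with ha | ha
    · obtain ⟨hb, hc⟩ := full S1 S2 hc1 hc2 mem12 notboth a b c hab hbc hac ha
      refine ⟨a, b, c, hab, hbc, hac, ?_⟩
      have hsub : triClosure G {a, b, c} ⊆ S1 := by
        apply Set.sInter_subset_of_mem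
        refine ⟨?_, tclosed S1 S2 hc1 hc2 mem12 notboth⟩
        intro v hv
        rcases hv with rfl | rfl | rfl
        · exact ha
        · exact hb
        · exact hc
      intro h
      exact notboth x2 (hsub (h ▸ Set.mem_univ x2)) hx2
    · have mem21 : ∀ v, v ∈ S2 ∨ v ∈ S1 := fun v => (mem12 v).symm
      have notboth' : ∀ v, v ∈ S2 → v ∈ S1 → False := fun v h2 h1 => notboth v h1 h2
      obtain ⟨hb, hc⟩ := full S2 S1 hc2 hc1 mem21 notboth' a b c hab hbc hac ha
      refine ⟨a, b, c, hab, hbc, hac, ?_⟩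
      have hsub : triClosure G {a, b, c} ⊆ S2 := by
        apply Set.sInter_subset_of_mem
        refine ⟨?_, tclosed S2 S1 hc2 hc1 mem21 notboth'⟩
        intro v hv
        rcases hv with rfl | rfl | rfl
        · exact ha
        · exact hb
        · exact hc
      intro h
      exact notboth x1 hx1 (hsub (h ▸ Set.mem_univ x1))
  · rintro ⟨a, b, c, hab, hbc, hac, hne⟩
    set S1 := triClosure G ({a, b, c} : Set V) with hS1def
    have hsub : ({a, b, c} : Set V) ⊆ S1 := by
      intro x hx
      exact Set.mem_sInter.mpr fun S hS => hS.1 hx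
    have hclosed : TriClosed G S1 := by
      intro x y z hxy hyz hxz hmem
      have key : ∀ S ∈ {S | ({a, b, c} : Set V) ⊆ S ∧ TriClosed G S},
          x ∈ S ∧ y ∈ S ∧ z ∈ S := by
        intro S hS
        apply hS.2 x y z hxy hyz hxz
        rcases hmem with h | h | h
        · exact Or.inl (Set.mem_sInter.mp h S hS)
        · exact Or.inr (Or.inl (Set.mem_sInter.mp h S hS))
        · exact Or.inr (Or.inr (Set.mem_sInter.mp h S hS))
      exact ⟨Set.mem_sInter.mpr fun S hS => (key S hS).1,
        Set.mem_sInter.mpr fun S hS => (key S hS).2.1,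
        Set.mem_sInter.mpr fun S hS => (key S hS).2.2⟩
    obtain ⟨x, hx⟩ := Set.ne_univ_iff_exists_notMem S1 |>.mp hne
    refine ⟨S1, S1ᶜ, ⟨a, hsub (by simp)⟩, ⟨x, hx⟩, disjoint_compl_right,
      Set.union_compl_self S1, ?_, ?_⟩
    · intro u v w hu hv huv hwu hwv
      exact (hclosed u v w huv hwv.symm hwu.symm (Or.inl hu)).2.2
    · intro u v w hu hv huv hwu hwv hw
      exact hu (hclosed w u v hwu huv hwv (Or.inl hw)).2.1
end

section
/- If both connected non-trivial graphs G and H contain a Δ-extreme vertex, then their Cartesian product G □ H contains a Δ-extreme vertex, and consequently φ_c(G □ H) = Θ_c(G □ H) = 2. -/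
variable {V : Type*}

variable {α β : Type*}


lemma aux_boxExtreme (G : SimpleGraph α) (H : SimpleGraph β) {x : α} (hx : DeltaExtreme G x)
    {y : β} (hy : DeltaExtreme H y) : DeltaExtreme (G.boxProd H) (x, y) := by
  rintro v w ⟨h1, h2, h3⟩
  rw [SimpleGraph.boxProd_adj] at h1 h2 h3
  rcases h1 with ⟨ha, he⟩ | ⟨ha, he⟩ <;> rcases h2 with ⟨hb, hf⟩ | ⟨hb, hf⟩ <;>
    rcases h3 with ⟨hc, hg⟩ | ⟨hc, hg⟩ <;> simp_all <;>
    first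
      | exact hx _ _ ⟨ha, hb, hc⟩
      | exact hy _ _ ⟨ha, hb, hc⟩

lemma aux_singleton_convex (G : SimpleGraph V) (z : V) : DeltaConvex G {z} := by
  intro u v w hu hv huv _ _
  simp only [Set.mem_singleton_iff] at hu hv
  exact absurd huv (by rw [hu, hv]; exact G.irrefl)

lemma aux_compl_convex (G : SimpleGraph V) {z : V} (hz : DeltaExtreme G z) :
    DeltaConvex G ({z}ᶜ) := by
  intro u v w hu hv huv hwu hwv hw
  simp only [Set.mem_compl_iff, Set.mem_singleton_iff] at hw
  subst hw
  exact hz u v ⟨hwu, hwv, huv⟩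

lemma aux_two_in_set (G : SimpleGraph V) {z : V} (hz : DeltaExtreme G z) (hnt : Nontrivial V) :
    2 ∈ {p | 2 ≤ p ∧ ∃ F : Fin p → Set V, IsDeltaPartition G F} ∧
    2 ∈ {p | 2 ≤ p ∧ ∃ F : Fin p → Set V, IsDeltaCover G F} := by
  obtain ⟨z', hz'⟩ := exists_ne z
  set F : Fin 2 → Set V := ![{z}, {z}ᶜ] with hF
  have hconv : ∀ i, DeltaConvex G (F i) := by
    intro i
    fin_cases i
    · exact aux_singleton_convex G z
    · exact aux_compl_convex G hz
  have hcup : (⋃ i, F i) = Set.univ := by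
    ext v
    simp only [Set.mem_iUnion, Set.mem_univ, iff_true]
    by_cases h : v = z
    · exact ⟨0, by simp [hF, h]⟩
    · exact ⟨1, by simp [hF, h]⟩
  constructor
  · exact ⟨le_refl 2, F, hconv, hcup, fun i => by
      fin_cases i
      · exact ⟨z, rfl⟩
      · exact ⟨z', by simp [hF, hz']⟩,
      fun i j hij => by
        fin_cases i <;> fin_cases j <;>
          first
            | exact absurd rfl hij
            | exact disjoint_compl_right
            | exact disjoint_compl_left⟩
  · refine ⟨le_refl 2, F, hconv, hcup, ?_⟩
    intro i hsub
    fin_cases i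
    · have := hsub (show z ∈ F 0 by simp [hF])
      simp only [Set.mem_iUnion] at this
      obtain ⟨j, hj, hmem⟩ := this
      fin_cases j
      · exact hj rfl
      · exact (hmem : z ∈ ({z}ᶜ : Set V)) rfl
    · have := hsub (show z' ∈ F 1 by simp [hF, hz'])
      simp only [Set.mem_iUnion] at this
      obtain ⟨j, hj, hmem⟩ := this
      fin_cases j
      · exact hz' (hmem : z' ∈ ({z} : Set V))
      · exact hj rfl

lemma aux_numbers_eq (G : SimpleGraph V) {z : V} (hz : DeltaExtreme G z) (hnt : Nontrivial V) :
    coverNumber G = 2 ∧ partitionNumber G = 2 := by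
  obtain ⟨hp, hc⟩ := aux_two_in_set G hz hnt
  constructor
  · exact le_antisymm (Nat.sInf_le hc) (Nat.sInf_mem ⟨2, hc⟩).1
  · exact le_antisymm (Nat.sInf_le hp) (Nat.sInf_mem ⟨2, hp⟩).1

theorem stmt13 [Fintype α] [Fintype β] (G : SimpleGraph α) (H : SimpleGraph β)
    (hG : G.Connected) (hH : H.Connected) (hGnt : Nontrivial α) (hHnt : Nontrivial β)
    (x : α) (hx : DeltaExtreme G x) (y : β) (hy : DeltaExtreme H y) :
    (∃ z : α × β, DeltaExtreme (G.boxProd H) z) ∧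
      coverNumber (G.boxProd H) = 2 ∧ partitionNumber (G.boxProd H) = 2 := by
  have hz := aux_boxExtreme G H hx hy
  have hnt : Nontrivial (α × β) := by
    obtain ⟨x1, x2, hne⟩ := hGnt
    exact ⟨(x1, y), (x2, y), by simp [hne]⟩
  obtain ⟨hc, hp⟩ := aux_numbers_eq (G.boxProd H) hz hnt
  exact ⟨⟨(x, y), hz⟩, hc, hp⟩
end

section
/- Let G and H be connected non-trivial graphs, and suppose G has a cut vertex. Then φ_c(G □ H) = 2. -/
variable {V : Type*}

variable {α β : Type*}

lemma fiber_deltaConvex (G : SimpleGraph α) (H : SimpleGraph β) {A : Set α}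
    (hA : DeltaConvex G A) : DeltaConvex (G.boxProd H) {p : α × β | p.1 ∈ A} := by
  rintro u v w hu hv huv hwu hwv
  rw [SimpleGraph.boxProd_adj] at huv hwu hwv
  rcases hwu with ⟨hwu1, hwu2⟩ | ⟨_, hwu1⟩
  · rcases hwv with ⟨hwv1, hwv2⟩ | ⟨_, hwv1⟩
    · rcases huv with ⟨huv1, _⟩ | ⟨huv1, _⟩
      · exact hA hu hv huv1 hwu1 hwv1
      · exact absurd (hwu2.symm.trans hwv2 : u.2 = v.2) huv1.ne
    · exact (show (w.1 : α) ∈ A from hwv1 ▸ hv)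
  · exact (show (w.1 : α) ∈ A from hwu1 ▸ hu)


theorem stmt15 [Fintype α] [Fintype β] (G : SimpleGraph α) (H : SimpleGraph β)
    (hG : G.Connected) (hH : H.Connected) (hGnt : Nontrivial α) (hHnt : Nontrivial β)
    (v : α) (hcut : ¬ (G.induce ({v}ᶜ : Set α)).Connected) :
    coverNumber (G.boxProd H) = 2 := by
  classical
  obtain ⟨b0, hb0⟩ := exists_ne v
  haveI hne : Nonempty ↥({v}ᶜ : Set α) := ⟨⟨b0, hb0⟩⟩
  rw [SimpleGraph.connected_iff] at hcut
  have hpre : ¬ (G.induce ({v}ᶜ : Set α)).Preconnected := fun h => hcut ⟨h, hne⟩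
  rw [SimpleGraph.Preconnected] at hpre
  push_neg at hpre
  obtain ⟨a, b, hab⟩ := hpre
  set C : Set α := {g | ∃ hg : g ∈ ({v}ᶜ : Set α),
    (G.induce ({v}ᶜ : Set α)).Reachable a ⟨g, hg⟩} with hC
  have haC : (a : α) ∈ C := ⟨a.2, by exact SimpleGraph.Reachable.refl _⟩
  have hbC : (b : α) ∉ C := by
    rintro ⟨hg, hr⟩
    exact hab (by convert hr)
  have hvC : v ∉ C := by rintro ⟨hg, -⟩; exact hg rfl
  have hext : ∀ g g', g ∈ C → g' ≠ v → G.Adj g g' → g' ∈ C := by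
    rintro g g' ⟨hg, hr⟩ hg' hadj
    exact ⟨hg', hr.trans (SimpleGraph.Adj.reachable (by exact hadj))⟩
  -- Δ-convexity of A := C ∪ {v}
  have hAconv : DeltaConvex G (C ∪ {v}) := by
    rintro g g' g'' hg hg' hadj h1 h2
    by_cases hgv : g'' = v
    · exact Or.inr hgv
    left
    rcases hg with hg | hg
    · exact hext g g'' hg hgv h1.symm
    · rcases hg' with hg' | hg'
      · exact hext g' g'' hg' hgv h2.symm
      · exact absurd (hg.trans hg'.symm : g = g') hadj.ne
  -- Δ-convexity of B := Cᶜ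
  have hBconv : DeltaConvex G Cᶜ := by
    rintro g g' g'' hg hg' hadj h1 h2 hgC
    have hgv : g = v := by
      by_contra h
      exact hg (hext g'' g hgC h h1)
    have hgv' : g' = v := by
      by_contra h
      exact hg' (hext g'' g' hgC h h2)
    exact hadj.ne (hgv.trans hgv'.symm)
  -- build the cover
  obtain ⟨h0⟩ : Nonempty β := inferInstance
  set F : Fin 2 → Set (α × β) :=
    ![{p | p.1 ∈ C ∪ {v}}, {p | p.1 ∈ Cᶜ}] with hF
  have hcover : IsDeltaCover (G.boxProd H) F := by
    refine ⟨?_, ?_, ?_⟩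
    · intro i
      fin_cases i
      · exact fiber_deltaConvex G H hAconv
      · exact fiber_deltaConvex G H hBconv
    · ext ⟨g, h⟩
      simp only [Set.mem_iUnion, Set.mem_univ, iff_true]
      by_cases hg : g ∈ C
      · exact ⟨0, Or.inl hg⟩
      · exact ⟨1, hg⟩
    · intro i hsub
      fin_cases i
      · have := hsub (show ((a : α), h0) ∈ F 0 from Or.inl haC)
        simp only [Set.mem_iUnion] at this
        obtain ⟨j, hj, hmem⟩ := this
        fin_cases j
        · simp at hj
        · exact (hmem : (a : α) ∈ Cᶜ) haC
      · have := hsub (show ((b : α), h0) ∈ F 1 from hbC)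
        simp only [Set.mem_iUnion] at this
        obtain ⟨j, hj, hmem⟩ := this
        fin_cases j
        · rcases (hmem : (b : α) ∈ C ∪ {v}) with h | h
          · exact hbC h
          · exact b.2 h
        · simp at hj
  have h2 : (2 : ℕ) ∈ {p | 2 ≤ p ∧ ∃ F : Fin p → Set (α × β),
      IsDeltaCover (G.boxProd H) F} := ⟨le_refl 2, F, hcover⟩
  exact le_antisymm (Nat.sInf_le h2) (Nat.sInf_mem ⟨2, h2⟩).1
end

section
/- If V ⊆ V(G) is a Δ-convex set of G, then V × V(H) is a Δ-convex set of the Cartesian product G □ H. -/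
variable {V : Type*}

variable {α β : Type*}

theorem stmt16 (G : SimpleGraph α) (H : SimpleGraph β) (S : Set α)
    (hS : DeltaConvex G S) :
    DeltaConvex (G.boxProd H) (S ×ˢ (Set.univ : Set β)) := by
  rintro ⟨u1, u2⟩ ⟨v1, v2⟩ ⟨w1, w2⟩ hu hv huv hwu hwv
  simp only [Set.mem_prod, Set.mem_univ, and_true] at hu hv ⊢
  simp only [SimpleGraph.boxProd_adj] at huv hwu hwv
  rcases huv with ⟨h1, rfl⟩ | ⟨h2, rfl⟩
  · rcases hwu with ⟨g1, rfl⟩ | ⟨g2, rfl⟩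
    · rcases hwv with ⟨g3, _⟩ | ⟨g4, rfl⟩
      · exact hS hu hv h1 g1 g3
      · exact hv
    · exact hu
  · rcases hwu with ⟨g1, rfl⟩ | ⟨g2, rfl⟩
    · rcases hwv with ⟨g3, h6⟩ | ⟨g4, h5⟩
      · exact (h2.ne h6).elim
      · exact h5 ▸ hu
    · exact hu
end

section
/- For connected non-trivial graphs G and H, φ_c(G □ H) ≤ min{φ_c(G), φ_c(H)} and Θ_c(G □ H) ≤ min{Θ_c(G), Θ_c(H)}. -/
variable {V : Type*}

variable {α β : Type*}

lemma deltaConvex_singleton (G : SimpleGraph V) (a : V) : DeltaConvex G {a} := by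
  intro u v w hu hv huv _ _
  simp only [Set.mem_singleton_iff] at hu hv
  subst hu; subst hv
  exact (G.irrefl huv).elim

lemma deltaConvex_preimage_fst (G : SimpleGraph α) (H : SimpleGraph β) {S : Set α}
    (hS : DeltaConvex G S) : DeltaConvex (G.boxProd H) (Prod.fst ⁻¹' S) := by
  intro u v w hu hv huv hwu hwv
  rw [SimpleGraph.boxProd_adj] at huv hwu hwv
  rcases hwu with ⟨hwuG, hwue⟩ | ⟨hwuH, hwue⟩
  · rcases huv with ⟨huvG, huve⟩ | ⟨huvH, huve⟩
    · rcases hwv with ⟨hwvG, _⟩ | ⟨_, hwve⟩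
      · exact hS hu hv huvG hwuG hwvG
      · show w.1 ∈ S; rw [hwve]; exact hv
    · rcases hwv with ⟨_, hwve⟩ | ⟨_, hwve⟩
      · exact absurd (hwue.symm.trans hwve) huvH.ne
      · show w.1 ∈ S; rw [hwve]; exact hv
  · show w.1 ∈ S; rw [hwue]; exact hu

lemma deltaConvex_preimage_snd (G : SimpleGraph α) (H : SimpleGraph β) {S : Set β}
    (hS : DeltaConvex H S) : DeltaConvex (G.boxProd H) (Prod.snd ⁻¹' S) := by
  intro u v w hu hv huv hwu hwv
  rw [SimpleGraph.boxProd_adj] at huv hwu hwv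
  rcases hwu with ⟨hwuG, hwue⟩ | ⟨hwuH, hwue⟩
  · show w.2 ∈ S; rw [hwue]; exact hu
  · rcases huv with ⟨huvG, huve⟩ | ⟨huvH, huve⟩
    · rcases hwv with ⟨_, hwve⟩ | ⟨_, hwve⟩
      · show w.2 ∈ S; rw [hwve]; exact hv
      · exact absurd (hwue.symm.trans hwve) huvG.ne
    · rcases hwv with ⟨_, hwve⟩ | ⟨hwvH, _⟩
      · show w.2 ∈ S; rw [hwve]; exact hv
      · exact hS hu hv huvH hwuH hwvH

lemma cover_lift_fst (G : SimpleGraph α) (H : SimpleGraph β) [Nonempty β] {p : ℕ}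
    {F : Fin p → Set α} (h : IsDeltaCover G F) :
    IsDeltaCover (G.boxProd H) (fun i => Prod.fst ⁻¹' F i) := by
  obtain ⟨hconv, hcov, hred⟩ := h
  refine ⟨fun i => deltaConvex_preimage_fst G H (hconv i), ?_, ?_⟩
  · rw [← Set.preimage_iUnion, hcov, Set.preimage_univ]
  · intro i hsub
    apply hred i
    intro x hx
    obtain ⟨b⟩ := ‹Nonempty β›
    have := hsub (show ((x, b) : α × β) ∈ Prod.fst ⁻¹' F i from hx)
    simp only [Set.mem_iUnion, Set.mem_compl_iff, Set.mem_singleton_iff,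
      Set.mem_preimage, exists_prop] at this ⊢
    exact this

lemma cover_lift_snd (G : SimpleGraph α) (H : SimpleGraph β) [Nonempty α] {p : ℕ}
    {F : Fin p → Set β} (h : IsDeltaCover H F) :
    IsDeltaCover (G.boxProd H) (fun i => Prod.snd ⁻¹' F i) := by
  obtain ⟨hconv, hcov, hred⟩ := h
  refine ⟨fun i => deltaConvex_preimage_snd G H (hconv i), ?_, ?_⟩
  · rw [← Set.preimage_iUnion, hcov, Set.preimage_univ]
  · intro i hsub
    apply hred i
    intro x hx
    obtain ⟨a⟩ := ‹Nonempty α›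
    have := hsub (show ((a, x) : α × β) ∈ Prod.snd ⁻¹' F i from hx)
    simp only [Set.mem_iUnion, Set.mem_compl_iff, Set.mem_singleton_iff,
      Set.mem_preimage, exists_prop] at this ⊢
    exact this

lemma partition_lift_fst (G : SimpleGraph α) (H : SimpleGraph β) [Nonempty β] {p : ℕ}
    {F : Fin p → Set α} (h : IsDeltaPartition G F) :
    IsDeltaPartition (G.boxProd H) (fun i => Prod.fst ⁻¹' F i) := by
  obtain ⟨hconv, hcov, hne, hdis⟩ := h
  refine ⟨fun i => deltaConvex_preimage_fst G H (hconv i), ?_, ?_, ?_⟩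
  · rw [← Set.preimage_iUnion, hcov, Set.preimage_univ]
  · intro i
    obtain ⟨x, hx⟩ := hne i
    obtain ⟨b⟩ := ‹Nonempty β›
    exact ⟨(x, b), hx⟩
  · intro i j hij
    exact (hdis i j hij).preimage _

lemma partition_lift_snd (G : SimpleGraph α) (H : SimpleGraph β) [Nonempty α] {p : ℕ}
    {F : Fin p → Set β} (h : IsDeltaPartition H F) :
    IsDeltaPartition (G.boxProd H) (fun i => Prod.snd ⁻¹' F i) := by
  obtain ⟨hconv, hcov, hne, hdis⟩ := h
  refine ⟨fun i => deltaConvex_preimage_snd G H (hconv i), ?_, ?_, ?_⟩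
  · rw [← Set.preimage_iUnion, hcov, Set.preimage_univ]
  · intro i
    obtain ⟨x, hx⟩ := hne i
    obtain ⟨a⟩ := ‹Nonempty α›
    exact ⟨(a, x), hx⟩
  · intro i j hij
    exact (hdis i j hij).preimage _

lemma singleton_cover [Fintype V] (G : SimpleGraph V) (hnt : Nontrivial V) :
    Fintype.card V ∈ {p | 2 ≤ p ∧ ∃ F : Fin p → Set V, IsDeltaCover G F} := by
  refine ⟨Fintype.one_lt_card, fun i => {(Fintype.equivFin V).symm i}, ?_, ?_, ?_⟩
  · exact fun i => deltaConvex_singleton G _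
  · ext x
    simp only [Set.mem_iUnion, Set.mem_singleton_iff, Set.mem_univ, iff_true]
    exact ⟨Fintype.equivFin V x, by simp⟩
  · intro i hsub
    have := hsub (Set.mem_singleton _)
    simp only [Set.mem_iUnion, Set.mem_compl_iff, Set.mem_singleton_iff,
      exists_prop] at this
    obtain ⟨j, hj, hej⟩ := this
    exact hj ((Fintype.equivFin V).symm.injective hej.symm)

lemma singleton_partition [Fintype V] (G : SimpleGraph V) (hnt : Nontrivial V) :
    Fintype.card V ∈ {p | 2 ≤ p ∧ ∃ F : Fin p → Set V, IsDeltaPartition G F} := by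
  refine ⟨Fintype.one_lt_card, fun i => {(Fintype.equivFin V).symm i}, ?_, ?_, ?_, ?_⟩
  · exact fun i => deltaConvex_singleton G _
  · ext x
    simp only [Set.mem_iUnion, Set.mem_singleton_iff, Set.mem_univ, iff_true]
    exact ⟨Fintype.equivFin V x, by simp⟩
  · exact fun i => ⟨_, Set.mem_singleton _⟩
  · intro i j hij
    simp only [Set.disjoint_singleton]
    exact fun h => hij ((Fintype.equivFin V).symm.injective h)

theorem stmt17 [Fintype α] [Fintype β] (G : SimpleGraph α) (H : SimpleGraph β)
    (hG : G.Connected) (hH : H.Connected) (hGnt : Nontrivial α) (hHnt : Nontrivial β) :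
    coverNumber (G.boxProd H) ≤ min (coverNumber G) (coverNumber H) ∧
      partitionNumber (G.boxProd H) ≤ min (partitionNumber G) (partitionNumber H) := by
  have hαne : Nonempty α := hGnt.to_nonempty
  have hβne : Nonempty β := hHnt.to_nonempty
  constructor
  · refine le_min ?_ ?_
    · have hmem := Nat.sInf_mem ⟨_, singleton_cover G hGnt⟩
      obtain ⟨h2, F, hF⟩ := hmem
      exact Nat.sInf_le ⟨h2, _, cover_lift_fst G H hF⟩
    · have hmem := Nat.sInf_mem ⟨_, singleton_cover H hHnt⟩
      obtain ⟨h2, F, hF⟩ := hmem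
      exact Nat.sInf_le ⟨h2, _, cover_lift_snd G H hF⟩
  · refine le_min ?_ ?_
    · have hmem := Nat.sInf_mem ⟨_, singleton_partition G hGnt⟩
      obtain ⟨h2, F, hF⟩ := hmem
      exact Nat.sInf_le ⟨h2, _, partition_lift_fst G H hF⟩
    · have hmem := Nat.sInf_mem ⟨_, singleton_partition H hHnt⟩
      obtain ⟨h2, F, hF⟩ := hmem
      exact Nat.sInf_le ⟨h2, _, partition_lift_snd G H hF⟩
end

section
/- If G and H are connected non-trivial graphs and Θ_c(G) = 2, then Θ_c(G □ H) = 2. -/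
variable {V : Type*}

variable {α β : Type*}


lemma deltaConvex_prod {α β : Type*} (G : SimpleGraph α) (H : SimpleGraph β)
    {A : Set α} (hA : DeltaConvex G A) :
    DeltaConvex (G.boxProd H) (A ×ˢ (Set.univ : Set β)) := by
  rintro ⟨u1, u2⟩ ⟨v1, v2⟩ ⟨w1, w2⟩ hu hv huv hwu hwv
  simp only [SimpleGraph.boxProd_adj] at huv hwu hwv
  simp only [Set.mem_prod, Set.mem_univ, and_true] at hu hv ⊢
  rcases huv with ⟨h1, h2⟩ | ⟨h1, h2⟩
  · subst h2
    rcases hwv with ⟨f1, f2⟩ | ⟨f1, f2⟩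
    · rcases hwu with ⟨g1, g2⟩ | ⟨g1, g2⟩
      · exact hA hu hv h1 g1 f1
      · exact g2 ▸ hu
    · exact f2 ▸ hv
  · subst h2
    rcases hwu with ⟨g1, g2⟩ | ⟨g1, g2⟩
    · rcases hwv with ⟨f1, f2⟩ | ⟨f1, f2⟩
      · exact absurd (g2.symm.trans f2) h1.ne
      · exact f2 ▸ hv
    · exact g2 ▸ hu

theorem stmt18' : True := trivial

theorem stmt18 [Fintype α] [Fintype β] (G : SimpleGraph α) (H : SimpleGraph β)
    (hG : G.Connected) (hH : H.Connected) (hGnt : Nontrivial α) (hHnt : Nontrivial β)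
    (hG2 : partitionNumber G = 2) :
    partitionNumber (G.boxProd H) = 2 := by
  have _ : Nonempty β := hHnt.to_nonempty
  have hne : {p | 2 ≤ p ∧ ∃ F : Fin p → Set α, IsDeltaPartition G F}.Nonempty := by
    by_contra h
    rw [Set.not_nonempty_iff_eq_empty] at h
    rw [partitionNumber, h, Nat.sInf_empty] at hG2
    exact absurd hG2 (by norm_num)
  have hmem := Nat.sInf_mem hne
  rw [partitionNumber] at hG2
  rw [hG2] at hmem
  obtain ⟨-, F, hConv, hUnion, hNe, hDisj⟩ := hmem
  have h2mem : 2 ∈ {p | 2 ≤ p ∧ ∃ F : Fin p → Set (α × β), IsDeltaPartition (G.boxProd H) F} := by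
    refine ⟨le_refl 2, fun i => F i ×ˢ Set.univ, fun i => deltaConvex_prod G H (hConv i), ?_, ?_, ?_⟩
    · ext ⟨a, b⟩
      simp only [Set.mem_iUnion, Set.mem_prod, Set.mem_univ, and_true, Set.mem_univ, iff_true]
      have : a ∈ ⋃ i, F i := hUnion ▸ Set.mem_univ a
      exact Set.mem_iUnion.mp this
    · intro i
      obtain ⟨a, ha⟩ := hNe i
      obtain ⟨b⟩ := (inferInstance : Nonempty β)
      exact ⟨(a, b), ha, Set.mem_univ b⟩
    · intro i j hij
      exact Set.disjoint_left.mpr fun ⟨a, b⟩ ⟨ha, _⟩ ⟨ha', _⟩ =>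
        Set.disjoint_left.mp (hDisj i j hij) ha ha'
  refine le_antisymm (Nat.sInf_le h2mem) ?_
  have := Nat.sInf_mem ⟨2, h2mem⟩
  exact this.1
end
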